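/- Let X : \D \to \C be holomorphic, let G \subset \C be open, let \Omega = X^{-1}(G), and let v : G \to [0,1) be harmonic and continuous up to those boundary points of G that lie in the closure of X(\D), with v = 0 at all such boundary points. Define H : \D \to \R by H = v \circ X on \Omega and H = 0 on \D \setminus \Omega. Then H is continuous on \D and subharmonic on \D. -/

import Mathlib

open scoped Classical

open Complex Set Metric Real Filter MeasureTheory

/-- `u` is harmonic on `s ⊆ ℂ`: it is `C²` there and its Laplacian vanishes. -/
def HarmonicOnSet (u : ℂ → ℝ) (s : Set ℂ) : Prop :=
  ContDiffOn ℝ 2 u s ∧ ∀ z ∈ s,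
    iteratedFDeriv ℝ 2 u z ![1, 1] + iteratedFDeriv ℝ 2 u z ![Complex.I, Complex.I] = 0

/-- `H` is subharmonic on the open set `s`: it is upper semicontinuous and satisfies the
sub-mean-value inequality on all sufficiently small circles about each point of `s`. -/
def SubharmonicOnSet (H : ℂ → ℝ) (s : Set ℂ) : Prop :=
  UpperSemicontinuousOn H s ∧ ∀ z ∈ s, ∃ r₀ > (0 : ℝ), ∀ r : ℝ, 0 < r → r ≤ r₀ →
    H z ≤ (1 / (2 * π)) * ∫ θ in (0 : ℝ)..(2 * π), H (z + r * Complex.exp (θ * Complex.I))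

/-!
Near a point `z` with `X z ∈ G`, `H = v ∘ X` is the real part of a holomorphic function (locally
`v = Re F`, so `v ∘ X = Re (F ∘ X)`), hence harmonic, and it has the mean-value property on small
circles. Elsewhere in the disk `H z = 0 ≤ H`, so the sub-mean-value inequality is trivial there.
Continuity across `∂Ω` comes from `v → 0` at the relevant boundary points of `G`.
-/

open Topology InnerProductSpace

theorem HarmonicOnSet.harmonicOnNhd {u : ℂ → ℝ} {s : Set ℂ} (hs : IsOpen s)
    (hu : HarmonicOnSet u s) : HarmonicOnNhd u s := by
  intro z hz
  refine ⟨hu.1.contDiffAt (hs.mem_nhds hz), ?_⟩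
  filter_upwards [hs.mem_nhds hz] with w hw
  rw [laplacian_eq_iteratedFDeriv_complexPlane]
  exact hu.2 w hw

theorem InnerProductSpace.HarmonicAt.comp_analyticAt {u : ℂ → ℝ} {f : ℂ → ℂ} {z : ℂ}
    (hu : HarmonicAt u (f z)) (hf : AnalyticAt ℂ f z) : HarmonicAt (u ∘ f) z := by
  obtain ⟨ρ, hρ, hball⟩ := Metric.eventually_nhds_iff_ball.mp hu.eventually
  obtain ⟨F, hF, hFu⟩ := HarmonicOnNhd.exists_analyticOnNhd_ball_re_eq hball
  have hre : (fun w => (F (f w)).re) =ᶠ[𝓝 z] u ∘ f := by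
    filter_upwards [hf.continuousAt.preimage_mem_nhds (ball_mem_nhds _ hρ)] with w hw
    exact hFu hw
  exact (harmonicAt_congr_nhds hre).mp ((hF (f z) (mem_ball_self hρ)).comp hf).harmonicAt_re

theorem InnerProductSpace.HarmonicAt.eventually_circleAverage_eq {E : Type*}
    [NormedAddCommGroup E] [NormedSpace ℝ E] [CompleteSpace E] {f : ℂ → E} {c : ℂ}
    (hf : HarmonicAt f c) : ∀ᶠ r in 𝓝 0, circleAverage f c r = f c := by
  obtain ⟨ε, hε, hball⟩ := Metric.eventually_nhds_iff_ball.mp hf.eventually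
  filter_upwards [ball_mem_nhds (0 : ℝ) hε] with r hr
  refine HarmonicOnNhd.circleAverage_eq fun w hw => hball w (closedBall_subset_ball ?_ hw)
  simpa using hr

theorem eventually_circleAverage_nonneg {f : ℂ → ℝ} {c : ℂ} (hf : ∀ᶠ w in 𝓝 c, 0 ≤ f w) :
    ∀ᶠ r in 𝓝 0, 0 ≤ circleAverage f c r := by
  obtain ⟨ε, hε, hball⟩ := Metric.eventually_nhds_iff_ball.mp hf
  filter_upwards [ball_mem_nhds (0 : ℝ) hε] with r hr
  refine circleAverage_nonneg_of_nonneg fun w hw => hball w ?_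
  rw [mem_sphere] at hw
  simpa [mem_ball, hw] using hr

theorem continuousAt_indicator_of_tendsto_nhdsWithin {α β : Type*} [TopologicalSpace α]
    [TopologicalSpace β] [Zero β] {s : Set α} {f : α → β} {p : α} (hp : p ∉ s)
    (hf : Tendsto f (𝓝[s] p) (𝓝 0)) : ContinuousAt (s.indicator f) p := by
  rw [ContinuousAt, indicator_of_notMem hp, ← nhdsWithin_univ, ← union_compl_self s,
    nhdsWithin_union, tendsto_sup]
  constructor
  · exact hf.congr' (eventually_nhdsWithin_of_forall fun x hx => (indicator_of_mem hx f).symm)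
  · exact tendsto_const_nhds.congr'
      (eventually_nhdsWithin_of_forall fun x hx => (indicator_of_notMem hx f).symm)

theorem IsOpen.continuousAt_indicator {α β : Type*} [TopologicalSpace α] [TopologicalSpace β]
    [Zero β] {s : Set α} (hs : IsOpen s) {f : α → β} (hf : ContinuousOn f s) {p : α}
    (hp : p ∈ frontier s → Tendsto f (𝓝[s] p) (𝓝 0)) : ContinuousAt (s.indicator f) p := by
  by_cases hps : p ∈ s
  · refine (hf.continuousAt (hs.mem_nhds hps)).congr ?_
    filter_upwards [hs.mem_nhds hps] with x hx using (indicator_of_mem hx f).symm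
  refine continuousAt_indicator_of_tendsto_nhdsWithin hps ?_
  by_cases hcl : p ∈ closure s
  · exact hp ⟨hcl, by rwa [hs.interior_eq]⟩
  · rw [notMem_closure_iff_nhdsWithin_eq_bot.mp hcl]
    exact tendsto_bot

theorem SubharmonicOnSet.of_eventually_le_circleAverage {H : ℂ → ℝ} {s : Set ℂ}
    (hH : UpperSemicontinuousOn H s)
    (hmean : ∀ z ∈ s, ∀ᶠ r in 𝓝[>] 0, H z ≤ circleAverage H z r) : SubharmonicOnSet H s := by
  refine ⟨hH, fun z hz => ?_⟩
  obtain ⟨ε, hε : 0 < ε, hsub⟩ := mem_nhdsGT_iff_exists_Ioo_subset.mp (hmean z hz)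
  refine ⟨ε / 2, half_pos hε, fun r hr hrε => ?_⟩
  have hle : H z ≤ circleAverage H z r := hsub ⟨hr, by linarith⟩
  simpa [circleAverage_def, circleMap] using hle

/-- Gluing lemma: if `X` is holomorphic on the disk, `v : G → [0,1)` is harmonic and
vanishes continuously at the boundary points of `G` lying in the closure of `X(𝔻)`, then
`H = v ∘ X` on `X⁻¹(G)`, extended by `0`, is continuous and subharmonic on the disk. -/
theorem glued_function_subharmonic
    (X : ℂ → ℂ) (hX : DifferentiableOn ℂ X (ball (0 : ℂ) 1))
    (G : Set ℂ) (hG : IsOpen G)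
    (v : ℂ → ℝ) (hv : HarmonicOnSet v G)
    (hv01 : ∀ z ∈ G, 0 ≤ v z ∧ v z < 1)
    (hvbd : ∀ p ∈ frontier G ∩ closure (X '' ball (0 : ℂ) 1),
      Filter.Tendsto v (nhdsWithin p G) (nhds 0))
    (H : ℂ → ℝ)
    (hH : ∀ z ∈ ball (0 : ℂ) 1, H z = if X z ∈ G then v (X z) else 0) :
    ContinuousOn H (ball (0 : ℂ) 1) ∧ SubharmonicOnSet H (ball (0 : ℂ) 1) := by
  have hHX : EqOn H (G.indicator v ∘ X) (ball 0 1) := fun z hz => by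
    simp [hH z hz, indicator_apply]
  have hXc : ∀ z ∈ ball (0 : ℂ) 1, ContinuousAt X z := fun z hz =>
    hX.continuousOn.continuousAt (isOpen_ball.mem_nhds hz)
  have hcont : ContinuousOn H (ball 0 1) := by
    refine ContinuousOn.congr (fun z hz => ContinuousAt.continuousWithinAt ?_) hHX
    exact (hG.continuousAt_indicator hv.1.continuousOn fun hp =>
      hvbd _ ⟨hp, subset_closure (mem_image_of_mem X hz)⟩).comp (hXc z hz)
  refine ⟨hcont, .of_eventually_le_circleAverage hcont.upperSemicontinuousOn fun z hz => ?_⟩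
  by_cases hXz : X z ∈ G
  · have hvX : HarmonicAt (v ∘ X) z := (hv.harmonicOnNhd hG (X z) hXz).comp_analyticAt
      (hX.analyticAt (isOpen_ball.mem_nhds hz))
    have hHz : HarmonicAt H z := by
      refine (harmonicAt_congr_nhds ?_).mpr hvX
      filter_upwards [isOpen_ball.mem_nhds hz,
        (hXc z hz).preimage_mem_nhds (hG.mem_nhds hXz)] with w hw hwG
      simp [hHX hw, indicator_of_mem (mem_preimage.mp hwG)]
    filter_upwards [nhdsWithin_le_nhds hHz.eventually_circleAverage_eq] with r hr using hr.ge
  · have hH0 : H z = 0 := by simp [hH z hz, hXz]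
    rw [hH0]
    refine nhdsWithin_le_nhds (eventually_circleAverage_nonneg ?_)
    filter_upwards [isOpen_ball.mem_nhds hz] with w hw
    rw [hHX hw]
    exact indicator_nonneg (fun y hy => (hv01 y hy).1) _
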